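/- arXiv:2206.11687 — 2 statements merged into one kernel-verified Lean document; each statement's English description precedes it below -/
import Mathlib

section
/- Let g > 0 and α_n = min{1, g/n}. Then for every x ∈ (0,1), lim_{n→∞} P[K_n/n ≤ x] = 1 - (1-x)^g, i.e., K_n/n converges in distribution to the Beta(1,g) distribution. -/
open Finset Filter

/-- The law of the snapshot chain `K_n` with reset probabilities `a`:
`p n k = P[K_n = k]`, with `K_1 = 1` a.s., support `{1,…,n}`,
`P[K_{n+1} = 1] = a (n+1)` and `P[K_{n+1} = k+1] = (1 - a (n+1)) * P[K_n = k]`. -/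
def IsSnapshotLaw (a : ℕ → ℝ) (p : ℕ → ℕ → ℝ) : Prop :=
  p 1 1 = 1 ∧
  (∀ n k, 1 ≤ n → (k = 0 ∨ n < k) → p n k = 0) ∧
  (∀ n, 1 ≤ n → p (n + 1) 1 = a (n + 1)) ∧
  (∀ n k, 1 ≤ n → 1 ≤ k → k ≤ n → p (n + 1) (k + 1) = (1 - a (n + 1)) * p n k)

/-- `E[K_n]` for the snapshot chain with law `p`. -/
noncomputable def snapExp (p : ℕ → ℕ → ℝ) (n : ℕ) : ℝ :=
  ∑ k ∈ Finset.Icc 1 n, (k : ℝ) * p n k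

section Aux

open Topology

private lemma tele (f : ℕ → ℝ) :
    ∀ n L, L ≤ n + 1 → ∑ j ∈ Icc L n, (f j - f (j+1)) = f L - f (n+1) := by
  intro n
  induction n with
  | zero => intro L hL; interval_cases L <;> simp
  | succ n ih =>
    intro L hL
    by_cases h : L ≤ n + 1
    · rw [Finset.sum_Icc_succ_top h, ih L h]; ring
    · have hL2 : L = n + 2 := by omega
      rw [hL2, Finset.Icc_eq_empty (by omega)]
      simp

private lemma shiftsum (f : ℕ → ℝ) (m n : ℕ) :
    ∑ k ∈ Icc (m+1) (n+1), f k = ∑ k ∈ Icc m n, f (k+1) := by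
  rw [← Finset.map_add_right_Icc m n 1, Finset.sum_map]
  rfl

private lemma snap_total (a : ℕ → ℝ) (p : ℕ → ℕ → ℝ) (hp : IsSnapshotLaw a p) :
    ∀ n, 1 ≤ n → ∑ k ∈ Icc 1 n, p n k = 1 := by
  obtain ⟨h1, h0, hresa, hrec⟩ := hp
  intro n
  induction n with
  | zero => omega
  | succ n ih =>
    intro _
    by_cases hn : 1 ≤ n
    · have : ∑ k ∈ Icc 1 (n+1), p (n+1) k
          = p (n+1) 1 + ∑ k ∈ Icc 2 (n+1), p (n+1) k := by
        have e1 : Icc 1 (n+1) = Ioc 0 (n+1) := Finset.Icc_add_one_left_eq_Ioc 0 (n+1)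
        have e2 : Icc 2 (n+1) = Ioc 1 (n+1) := Finset.Icc_add_one_left_eq_Ioc 1 (n+1)
        rw [e1, e2,
          ← Finset.sum_Ioc_consecutive (fun k => p (n+1) k) (Nat.zero_le 1) (by omega : 1 ≤ n+1)]
        simp
      rw [this, show (2:ℕ) = 1 + 1 from rfl, shiftsum (fun k => p (n+1) k) 1 n]
      have : ∑ k ∈ Icc 1 n, p (n+1) (k+1) = (1 - a (n+1)) * ∑ k ∈ Icc 1 n, p n k := by
        rw [Finset.mul_sum]
        exact Finset.sum_congr rfl fun k hk => by
          simp only [Finset.mem_Icc] at hk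
          exact hrec n k hn hk.1 hk.2
      rw [this, ih hn, hresa n hn]; ring
    · have : n = 0 := by omega
      subst this; simpa using h1

private lemma snap_tail (a : ℕ → ℝ) (p : ℕ → ℕ → ℝ) (hp : IsSnapshotLaw a p) :
    ∀ n, 1 ≤ n → ∀ m, 1 ≤ m → m ≤ n →
      ∑ k ∈ Icc m n, p n k = ∏ j ∈ Icc (n + 2 - m) n, (1 - a j) := by
  obtain ⟨h1, h0, hresa, hrec⟩ := hp
  intro n
  induction n with
  | zero => omega
  | succ n ih =>
    intro _ m hm1 hmn
    rcases Nat.lt_or_ge 1 m with hm2 | hm2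
    · obtain ⟨m₀, rfl⟩ : ∃ m₀, m = m₀ + 1 := ⟨m - 1, by omega⟩
      have hm₀ : 1 ≤ m₀ := by omega
      have hm₀n : m₀ ≤ n := by omega
      have hn1 : 1 ≤ n := by omega
      rw [shiftsum (fun k => p (n+1) k) m₀ n]
      have : ∑ k ∈ Icc m₀ n, p (n+1) (k+1) = (1 - a (n+1)) * ∑ k ∈ Icc m₀ n, p n k := by
        rw [Finset.mul_sum]
        exact Finset.sum_congr rfl fun k hk => by
          simp only [Finset.mem_Icc] at hk
          exact hrec n k hn1 (le_trans hm₀ hk.1) hk.2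
      rw [this, ih hn1 m₀ hm₀ hm₀n]
      have hidx : n + 1 + 2 - (m₀ + 1) = n + 2 - m₀ := by omega
      rw [hidx, Finset.prod_Icc_succ_top (by omega : n + 2 - m₀ ≤ n + 1)]
      ring
    · have : m = 1 := by omega
      subst this
      rw [snap_total a p ⟨h1, h0, hresa, hrec⟩ (n+1) (by omega),
        Finset.Icc_eq_empty (by omega : ¬ n + 1 + 2 - 1 ≤ n + 1), Finset.prod_empty]

private lemma log_bounds (g y : ℝ) (hg : 0 < g) (hy : g + 1 < y) :
    g * (Real.log (y - g - 1) - Real.log (y - g)) ≤ Real.log (1 - g/y) ∧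
    Real.log (1 - g/y) ≤ g * (Real.log y - Real.log (y+1)) := by
  have hy0 : 0 < y := by linarith
  have h1 : 0 < y - g := by linarith
  have h2 : 0 < y - g - 1 := by linarith
  have h3 : 0 < 1 - g/y := by
    rw [sub_pos, div_lt_one hy0]; linarith
  constructor
  · have e : Real.log (1 - g/y) = Real.log (y - g) - Real.log y := by
      rw [show 1 - g/y = (y-g)/y by field_simp, Real.log_div h1.ne' hy0.ne']
    rw [e]
    have A : Real.log y - Real.log (y-g) ≤ g/(y-g) := by
      rw [← Real.log_div hy0.ne' h1.ne']
      calc Real.log (y/(y-g)) ≤ y/(y-g) - 1 := Real.log_le_sub_one_of_pos (div_pos hy0 h1)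
        _ = g/(y-g) := by field_simp; ring
    have B : 1/(y-g) ≤ Real.log (y-g) - Real.log (y-g-1) := by
      have h := Real.log_le_sub_one_of_pos (div_pos h2 h1)
      rw [Real.log_div h2.ne' h1.ne'] at h
      have e2 : (y-g-1)/(y-g) - 1 = -(1/(y-g)) := by field_simp; ring
      linarith
    have B' := mul_le_mul_of_nonneg_left B hg.le
    have e3 : g * (1/(y-g)) = g/(y-g) := mul_one_div g _
    linarith
  · have A : Real.log (1 - g/y) ≤ -(g/y) := by
      have := Real.log_le_sub_one_of_pos h3; linarith
    have B : Real.log (y+1) - Real.log y ≤ 1/y := by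
      rw [← Real.log_div (by linarith) hy0.ne']
      calc Real.log ((y+1)/y) ≤ (y+1)/y - 1 :=
            Real.log_le_sub_one_of_pos (div_pos (by linarith) hy0)
        _ = 1/y := by field_simp; ring
    have B' := mul_le_mul_of_nonneg_left B hg.le
    have e3 : g * (1/y) = g/y := mul_one_div g y
    linarith

private lemma prod_bounds (g : ℝ) (hg : 0 < g) (L n : ℕ) (hgL : g + 2 < (L:ℝ)) (hLn : L ≤ n) :
    Real.exp (g * (Real.log ((L:ℝ) - g - 1) - Real.log ((n:ℝ) - g)))
      ≤ ∏ j ∈ Icc L n, (1 - g/(j:ℝ)) ∧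
    ∏ j ∈ Icc L n, (1 - g/(j:ℝ)) ≤ Real.exp (g * (Real.log (L:ℝ) - Real.log ((n:ℝ)+1))) := by
  have key : ∀ j ∈ Icc L n, g + 1 < (j:ℝ) := by
    intro j hj
    simp only [mem_Icc] at hj
    have : (L:ℝ) ≤ (j:ℝ) := Nat.cast_le.2 hj.1
    linarith
  have hpos : ∀ j ∈ Icc L n, 0 < 1 - g/(j:ℝ) := by
    intro j hj
    have hj' := key j hj
    rw [sub_pos, div_lt_one (by linarith)]; linarith
  have eP : ∏ j ∈ Icc L n, (1 - g/(j:ℝ)) =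
      Real.exp (∑ j ∈ Icc L n, Real.log (1 - g/(j:ℝ))) := by
    rw [Real.exp_sum]
    exact Finset.prod_congr rfl fun j hj => (Real.exp_log (hpos j hj)).symm
  constructor
  · rw [eP]
    apply Real.exp_le_exp.2
    set f : ℕ → ℝ := fun j => Real.log ((j:ℝ) - g - 1) with hf
    have tsum := tele f n L (by omega)
    have e1 : f (n+1) = Real.log ((n:ℝ) - g) := by
      simp only [hf]; push_cast; ring_nf
    calc g * (Real.log ((L:ℝ) - g - 1) - Real.log ((n:ℝ) - g))
        = ∑ j ∈ Icc L n, g * (f j - f (j+1)) := by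
          rw [← Finset.mul_sum, tsum, e1]
      _ ≤ ∑ j ∈ Icc L n, Real.log (1 - g/(j:ℝ)) := by
          apply Finset.sum_le_sum
          intro j hj
          have e2 : f (j+1) = Real.log ((j:ℝ) - g) := by
            simp only [hf]; push_cast; ring_nf
          rw [e2]
          exact (log_bounds g (j:ℝ) hg (key j hj)).1
  · rw [eP]
    apply Real.exp_le_exp.2
    set f : ℕ → ℝ := fun j => Real.log (j:ℝ) with hf
    have tsum := tele f n L (by omega)
    have e1 : f (n+1) = Real.log ((n:ℝ) + 1) := by
      simp only [hf]; push_cast; ring_nf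
    calc ∑ j ∈ Icc L n, Real.log (1 - g/(j:ℝ))
        ≤ ∑ j ∈ Icc L n, g * (f j - f (j+1)) := by
          apply Finset.sum_le_sum
          intro j hj
          have e2 : f (j+1) = Real.log ((j:ℝ) + 1) := by
            simp only [hf]; push_cast; ring_nf
          rw [e2]
          exact (log_bounds g (j:ℝ) hg (key j hj)).2
      _ = g * (Real.log (L:ℝ) - Real.log ((n:ℝ) + 1)) := by
          rw [← Finset.mul_sum, tsum, e1]

noncomputable def mfun (x : ℝ) (n : ℕ) : ℕ := ⌊(n:ℝ)*x⌋₊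
noncomputable def Lfun (x : ℝ) (n : ℕ) : ℕ := n + 1 - mfun x n

private lemma mfun_le {x : ℝ} (hx : 0 ≤ x) (n : ℕ) : (mfun x n : ℝ) ≤ (n:ℝ)*x :=
  Nat.floor_le (by positivity)

private lemma mfun_lt (x : ℝ) (n : ℕ) : (n:ℝ)*x - 1 < (mfun x n : ℝ) :=
  Nat.sub_one_lt_floor _

private lemma mfun_le_n {x : ℝ} (hx0 : 0 ≤ x) (hx1 : x ≤ 1) (n : ℕ) : mfun x n ≤ n := by
  have h1 := mfun_le hx0 n
  have h2 : (n:ℝ)*x ≤ (n:ℝ) := by nlinarith [Nat.cast_nonneg (α := ℝ) n]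
  exact_mod_cast le_trans h1 h2

private lemma Lfun_cast {x : ℝ} (hx0 : 0 ≤ x) (hx1 : x ≤ 1) (n : ℕ) :
    (Lfun x n : ℝ) = (n:ℝ) + 1 - (mfun x n : ℝ) := by
  have h : mfun x n ≤ n + 1 := le_trans (mfun_le_n hx0 hx1 n) (by omega)
  unfold Lfun
  rw [Nat.cast_sub h]
  push_cast
  ring

private lemma mfun_div_tendsto {x : ℝ} (hx : 0 ≤ x) :
    Tendsto (fun n : ℕ => (mfun x n : ℝ) / n) atTop (𝓝 x) := by
  have h := (tendsto_nat_floor_mul_div_atTop hx).comp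
    (tendsto_natCast_atTop_atTop (R := ℝ))
  refine h.congr fun n => ?_
  simp only [Function.comp, mfun, mul_comm]

private lemma Lfun_div_tendsto {x : ℝ} (hx0 : 0 < x) (hx1 : x < 1) :
    Tendsto (fun n : ℕ => (Lfun x n : ℝ) / n) atTop (𝓝 (1-x)) := by
  have h : Tendsto (fun n : ℕ => 1 + 1/(n:ℝ) - (mfun x n : ℝ)/n) atTop (𝓝 (1 + 0 - x)) :=
    (tendsto_const_nhds.add tendsto_one_div_atTop_nhds_zero_nat).sub (mfun_div_tendsto hx0.le)
  rw [show (1:ℝ) + 0 - x = 1 - x by ring] at h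
  apply h.congr'
  filter_upwards [eventually_ge_atTop 1] with n hn
  have hn0 : ((n:ℝ)) ≠ 0 := Nat.cast_ne_zero.2 (by omega)
  rw [Lfun_cast hx0.le hx1.le n]
  field_simp

private lemma Lfun_tendsto_atTop {x : ℝ} (hx0 : 0 < x) (hx1 : x < 1) :
    Tendsto (fun n : ℕ => (Lfun x n : ℝ)) atTop atTop := by
  apply tendsto_atTop_mono' atTop ?_
    ((tendsto_natCast_atTop_atTop (R := ℝ)).atTop_mul_const (by linarith : (0:ℝ) < 1 - x))
  filter_upwards [eventually_ge_atTop 1] with n hn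
  have h1 := mfun_le hx0.le n
  rw [Lfun_cast hx0.le hx1.le n]
  nlinarith

private lemma ratio1_tendsto {g x : ℝ} (hx0 : 0 < x) (hx1 : x < 1) :
    Tendsto (fun n : ℕ => ((Lfun x n : ℝ) - g - 1)/((n:ℝ) - g)) atTop (𝓝 (1-x)) := by
  have num : Tendsto (fun n : ℕ => (Lfun x n : ℝ)/n - (g+1)*(1/n)) atTop
      (𝓝 ((1-x) - (g+1)*0)) :=
    (Lfun_div_tendsto hx0 hx1).sub (tendsto_one_div_atTop_nhds_zero_nat.const_mul _)
  have den : Tendsto (fun n : ℕ => 1 - g*(1/(n:ℝ))) atTop (𝓝 (1 - g*0)) :=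
    tendsto_const_nhds.sub (tendsto_one_div_atTop_nhds_zero_nat.const_mul _)
  have hdiv := num.div den (by norm_num)
  rw [show ((1-x) - (g+1)*0)/(1 - g*0) = 1 - x by norm_num] at hdiv
  apply hdiv.congr'
  filter_upwards [eventually_ge_atTop 1,
    (tendsto_natCast_atTop_atTop (R := ℝ)).eventually_gt_atTop g] with n hn hgn
  have hn0 : ((n:ℝ)) ≠ 0 := Nat.cast_ne_zero.2 (by omega)
  have hng : (n:ℝ) - g ≠ 0 := by linarith
  simp only [Pi.div_apply]
  field_simp
  ring

private lemma ratio2_tendsto {x : ℝ} (hx0 : 0 < x) (hx1 : x < 1) :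
    Tendsto (fun n : ℕ => (Lfun x n : ℝ)/((n:ℝ) + 1)) atTop (𝓝 (1-x)) := by
  have num : Tendsto (fun n : ℕ => (Lfun x n : ℝ)/n) atTop (𝓝 (1-x)) :=
    Lfun_div_tendsto hx0 hx1
  have den : Tendsto (fun n : ℕ => 1 + 1*(1/(n:ℝ))) atTop (𝓝 (1 + 1*0)) :=
    tendsto_const_nhds.add (tendsto_one_div_atTop_nhds_zero_nat.const_mul _)
  have hdiv := num.div den (by norm_num)
  rw [show ((1-x))/(1 + 1*0) = 1 - x by norm_num] at hdiv
  apply hdiv.congr'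
  filter_upwards [eventually_ge_atTop 1] with n hn
  have hn0 : ((n:ℝ)) ≠ 0 := Nat.cast_ne_zero.2 (by omega)
  simp only [Pi.div_apply]
  field_simp

private lemma exp_lim_b (g x : ℝ) (hg : 0 < g) (hx0 : 0 < x) (hx1 : x < 1) :
    Tendsto (fun n : ℕ =>
        Real.exp (g * (Real.log ((Lfun x n : ℝ) - g - 1) - Real.log ((n:ℝ) - g))))
      atTop (𝓝 ((1-x) ^ g)) := by
  have hx1' : (0:ℝ) < 1 - x := by linarith
  have hr := ratio1_tendsto (g := g) hx0 hx1
  have hlog : Tendsto (fun n : ℕ => Real.log (((Lfun x n : ℝ) - g - 1)/((n:ℝ) - g)))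
      atTop (𝓝 (Real.log (1-x))) :=
    ((Real.continuousAt_log hx1'.ne').tendsto).comp hr
  have hexp : Tendsto (fun n : ℕ =>
      Real.exp (g * Real.log (((Lfun x n : ℝ) - g - 1)/((n:ℝ) - g))))
      atTop (𝓝 (Real.exp (g * Real.log (1-x)))) :=
    (Real.continuous_exp.tendsto _).comp (hlog.const_mul g)
  rw [show (1-x) ^ g = Real.exp (g * Real.log (1-x)) by
    rw [Real.rpow_def_of_pos hx1', mul_comm]]
  apply hexp.congr'
  filter_upwards [(Lfun_tendsto_atTop hx0 hx1).eventually_gt_atTop (g+2),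
    (tendsto_natCast_atTop_atTop (R := ℝ)).eventually_gt_atTop (g+2)] with n hL hn
  rw [Real.log_div (by linarith) (by linarith)]

private lemma exp_lim_c (g x : ℝ) (hg : 0 < g) (hx0 : 0 < x) (hx1 : x < 1) :
    Tendsto (fun n : ℕ =>
        Real.exp (g * (Real.log ((Lfun x n : ℝ)) - Real.log ((n:ℝ) + 1))))
      atTop (𝓝 ((1-x) ^ g)) := by
  have hx1' : (0:ℝ) < 1 - x := by linarith
  have hr := ratio2_tendsto hx0 hx1
  have hlog : Tendsto (fun n : ℕ => Real.log ((Lfun x n : ℝ)/((n:ℝ) + 1)))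
      atTop (𝓝 (Real.log (1-x))) :=
    ((Real.continuousAt_log hx1'.ne').tendsto).comp hr
  have hexp : Tendsto (fun n : ℕ =>
      Real.exp (g * Real.log ((Lfun x n : ℝ)/((n:ℝ) + 1))))
      atTop (𝓝 (Real.exp (g * Real.log (1-x)))) :=
    (Real.continuous_exp.tendsto _).comp (hlog.const_mul g)
  rw [show (1-x) ^ g = Real.exp (g * Real.log (1-x)) by
    rw [Real.rpow_def_of_pos hx1', mul_comm]]
  apply hexp.congr'
  filter_upwards [(Lfun_tendsto_atTop hx0 hx1).eventually_gt_atTop (g+2),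
    (tendsto_natCast_atTop_atTop (R := ℝ)).eventually_gt_atTop (g+2)] with n hL hn
  rw [Real.log_div (by linarith) (by linarith)]

end Aux

open Topology in
theorem snapshot_linear_beta_limit (g : ℝ) (hg : 0 < g)
    (a : ℕ → ℝ) (p : ℕ → ℕ → ℝ)
    (ha : ∀ n, a n = min 1 (g / (n : ℝ)))
    (hp : IsSnapshotLaw a p) (x : ℝ) (hx : x ∈ Set.Ioo (0 : ℝ) 1) :
    Tendsto
      (fun n : ℕ => ∑ k ∈ (Finset.Icc 1 n).filter (fun k : ℕ => (k : ℝ) ≤ (n : ℝ) * x), p n k)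
      atTop (nhds (1 - (1 - x) ^ g)) := by
  obtain ⟨hx0, hx1⟩ := hx
  have hx1' : (0:ℝ) < 1 - x := by linarith
  -- eventual good set
  have hEv : ∀ᶠ n : ℕ in atTop,
      1 ≤ n ∧ 1 ≤ mfun x n ∧ g + 2 < (Lfun x n : ℝ) ∧ Lfun x n ≤ n := by
    filter_upwards [eventually_ge_atTop 1,
      ((tendsto_natCast_atTop_atTop (R := ℝ)).atTop_mul_const hx0).eventually_ge_atTop 2,
      (Lfun_tendsto_atTop hx0 hx1).eventually_gt_atTop (g+2)] with n h1 h2 h3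
    have hmlt := mfun_lt x n
    have hm1 : 1 ≤ mfun x n := by
      have h5 : (0:ℝ) < (mfun x n : ℝ) := by linarith
      exact_mod_cast Nat.cast_pos.mp h5
    refine ⟨h1, hm1, h3, ?_⟩
    show n + 1 - mfun x n ≤ n
    omega
  -- eventual formula for the CDF partial sum
  have hS : ∀ᶠ n : ℕ in atTop,
      ∑ k ∈ (Finset.Icc 1 n).filter (fun k : ℕ => (k : ℝ) ≤ (n : ℝ) * x), p n k
        = 1 - ∏ j ∈ Icc (Lfun x n) n, (1 - g/(j:ℝ)) := by
    filter_upwards [hEv] with n hn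
    obtain ⟨hn1, hm1, hgL, hLn⟩ := hn
    have hmn : mfun x n ≤ n := mfun_le_n hx0.le hx1.le n
    have hmltn : mfun x n < n := by
      have h1 := mfun_le hx0.le n
      have h2 : (n:ℝ)*x < (n:ℝ) := by
        have : (0:ℝ) < n := by exact_mod_cast hn1
        nlinarith
      exact_mod_cast lt_of_le_of_lt h1 h2
    have hfilter : (Finset.Icc 1 n).filter (fun k : ℕ => (k : ℝ) ≤ (n : ℝ) * x)
        = Icc 1 (mfun x n) := by
      ext k
      simp only [mem_filter, mem_Icc]
      constructor
      · rintro ⟨⟨hk1, hkn⟩, hkx⟩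
        exact ⟨hk1, Nat.le_floor hkx⟩
      · rintro ⟨hk1, hkm⟩
        refine ⟨⟨hk1, le_trans hkm hmn⟩, ?_⟩
        exact (Nat.le_floor_iff (by positivity : (0:ℝ) ≤ (n:ℝ)*x)).1 hkm
    rw [hfilter]
    have e0 : Icc 1 n = Ioc 0 n := Finset.Icc_add_one_left_eq_Ioc 0 n
    have e1 : Icc 1 (mfun x n) = Ioc 0 (mfun x n) := Finset.Icc_add_one_left_eq_Ioc 0 _
    have e2 : Icc (mfun x n + 1) n = Ioc (mfun x n) n := Finset.Icc_add_one_left_eq_Ioc _ n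
    have hsplit := Finset.sum_Ioc_consecutive (fun k => p n k)
      (Nat.zero_le (mfun x n)) hmn
    have htot : ∑ k ∈ Icc 1 n, p n k = 1 := snap_total a p hp n hn1
    rw [e0] at htot
    have hstep : ∑ k ∈ Icc 1 (mfun x n), p n k
        = 1 - ∑ k ∈ Icc (mfun x n + 1) n, p n k := by
      rw [e1, e2]
      linarith [hsplit]
    rw [hstep]
    have htail := snap_tail a p hp n hn1 (mfun x n + 1) (by omega) (by omega)
    have hidx : n + 2 - (mfun x n + 1) = Lfun x n := by
      show _ = n + 1 - mfun x n
      omega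
    rw [hidx] at htail
    rw [htail]
    have hprod : ∏ j ∈ Icc (Lfun x n) n, (1 - a j)
        = ∏ j ∈ Icc (Lfun x n) n, (1 - g/(j:ℝ)) := by
      apply Finset.prod_congr rfl
      intro j hj
      simp only [mem_Icc] at hj
      have hjL : (Lfun x n : ℝ) ≤ (j:ℝ) := Nat.cast_le.2 hj.1
      have hj0 : (0:ℝ) < (j:ℝ) := by linarith
      rw [ha j, min_eq_right]
      rw [div_le_one hj0]; linarith
    rw [hprod]
  -- the product converges to (1-x)^g
  have hb := exp_lim_b g x hg hx0 hx1
  have hc := exp_lim_c g x hg hx0 hx1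
  have hlow : ∀ᶠ n : ℕ in atTop,
      Real.exp (g * (Real.log ((Lfun x n : ℝ) - g - 1) - Real.log ((n:ℝ) - g)))
        ≤ ∏ j ∈ Icc (Lfun x n) n, (1 - g/(j:ℝ)) := by
    filter_upwards [hEv] with n hn
    exact (prod_bounds g hg (Lfun x n) n hn.2.2.1 hn.2.2.2).1
  have hupp : ∀ᶠ n : ℕ in atTop,
      ∏ j ∈ Icc (Lfun x n) n, (1 - g/(j:ℝ))
        ≤ Real.exp (g * (Real.log ((Lfun x n : ℝ)) - Real.log ((n:ℝ) + 1))) := by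
    filter_upwards [hEv] with n hn
    exact (prod_bounds g hg (Lfun x n) n hn.2.2.1 hn.2.2.2).2
  have hprodlim : Tendsto (fun n : ℕ => ∏ j ∈ Icc (Lfun x n) n, (1 - g/(j:ℝ)))
      atTop (𝓝 ((1-x) ^ g)) :=
    tendsto_of_tendsto_of_tendsto_of_le_of_le' hb hc hlow hupp
  have hfinal : Tendsto (fun n : ℕ => 1 - ∏ j ∈ Icc (Lfun x n) n, (1 - g/(j:ℝ)))
      atTop (𝓝 (1 - (1-x) ^ g)) :=
    tendsto_const_nhds.sub hprodlim
  exact hfinal.congr' (by filter_upwards [hS] with n h; exact h.symm)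
end

section
/- Let g > 0, α ∈ (1,2), and α_n = min{1, g/n^α}. Let L_n = n+1-K_n. Then E[L_n] = (g/(2-α)) n^{2-α} + o(n^{2-α}) as n → ∞. -/
open Finset Filter

set_option maxHeartbeats 1000000

section SnapshotAux
variable {a : ℕ → ℝ} {p : ℕ → ℕ → ℝ}

lemma tangent_rpow {b : ℝ} (hb0 : 0 < b) (hb1 : b ≤ 1) {x y : ℝ} (hx : 0 < x) (hy : 0 ≤ y) :
    y ^ b ≤ x ^ b + b * x ^ (b - 1) * (y - x) := by
  have hz : -1 ≤ y / x - 1 := by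
    have : 0 ≤ y / x := div_nonneg hy hx.le
    linarith
  have h := rpow_one_add_le_one_add_mul_self hz hb0.le hb1
  have hyx : (1 : ℝ) + (y / x - 1) = y / x := by ring
  rw [hyx] at h
  have hxb : (0:ℝ) < x ^ b := Real.rpow_pos_of_pos hx b
  have h2 : (y / x) ^ b * x ^ b ≤ (1 + b * (y / x - 1)) * x ^ b :=
    mul_le_mul_of_nonneg_right h hxb.le
  have h3 : (y / x) ^ b * x ^ b = y ^ b := by
    rw [← Real.mul_rpow (div_nonneg hy hx.le) hx.le, div_mul_cancel₀ _ hx.ne']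
  have h4 : x ^ (b - 1) = x ^ b / x := by
    rw [Real.rpow_sub hx, Real.rpow_one]
  rw [h3] at h2
  calc y ^ b ≤ (1 + b * (y / x - 1)) * x ^ b := h2
    _ = x ^ b + b * (x ^ b / x) * (y - x) := by field_simp
    _ = x ^ b + b * x ^ (b - 1) * (y - x) := by rw [h4]


lemma sum_rpow_le {t : ℝ} (ht0 : 0 < t) (ht1 : t ≤ 1) (n : ℕ) :
    t * ∑ k ∈ Icc 1 n, (k : ℝ) ^ (t - 1) ≤ (n : ℝ) ^ t := by
  induction n with
  | zero => simp [Real.zero_rpow ht0.ne']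
  | succ n ih =>
    rw [Finset.sum_Icc_succ_top (by omega : 1 ≤ n + 1), mul_add]
    have key : t * ((n : ℝ) + 1) ^ (t - 1) ≤ ((n:ℝ)+1) ^ t - (n : ℝ) ^ t := by
      have := tangent_rpow ht0 ht1 (x := (n:ℝ)+1) (y := (n:ℝ))
        (by positivity) (Nat.cast_nonneg n)
      have h5 : (n:ℝ) - ((n:ℝ)+1) = -1 := by ring
      rw [h5] at this
      nlinarith [this]
    push_cast
    nlinarith [key, ih]


lemma shift_sum (f : ℕ → ℝ) (n : ℕ) :
    ∑ k ∈ Icc 1 (n + 1), f k = f 1 + ∑ k ∈ Icc 1 n, f (k + 1) := by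
  induction n with
  | zero => simp
  | succ n ih =>
    rw [Finset.sum_Icc_succ_top (by omega : 1 ≤ n + 1 + 1), ih,
      Finset.sum_Icc_succ_top (by omega : 1 ≤ n + 1)]
    ring


lemma snap_mass (hp : IsSnapshotLaw a p) : ∀ n, 1 ≤ n → ∑ k ∈ Icc 1 n, p n k = 1 := by
  obtain ⟨h1, h0, hr, hs⟩ := hp
  intro n hn
  induction n, hn using Nat.le_induction with
  | base => simpa using h1
  | succ n hn ih =>
    rw [shift_sum (fun k => p (n + 1) k) n, hr n hn]
    have hcong : ∑ k ∈ Icc 1 n, p (n + 1) (k + 1)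
        = ∑ k ∈ Icc 1 n, (1 - a (n + 1)) * p n k := by
      refine Finset.sum_congr rfl fun k hk => ?_
      rw [Finset.mem_Icc] at hk
      exact hs n k hn hk.1 hk.2
    rw [hcong, ← Finset.mul_sum, ih]
    ring

lemma snap_nonneg (hp : IsSnapshotLaw a p) (ha : ∀ n, 1 ≤ n → 0 ≤ a n ∧ a n ≤ 1) :
    ∀ n, 1 ≤ n → ∀ k, 0 ≤ p n k := by
  obtain ⟨h1, h0, hr, hs⟩ := hp
  intro n hn
  induction n, hn using Nat.le_induction with
  | base =>
    intro k
    rcases eq_or_ne k 1 with rfl | hk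
    · rw [h1]; norm_num
    · rw [h0 1 k le_rfl (by omega)]
  | succ n hn ih =>
    intro k
    match k with
    | 0 => rw [h0 (n+1) 0 (by omega) (Or.inl rfl)]
    | 1 => rw [hr n hn]; exact (ha (n+1) (by omega)).1
    | (j+2) =>
      rcases le_or_gt (j + 1) n with h | h
      · rw [hs n (j+1) hn (by omega) h]
        exact mul_nonneg (by linarith [(ha (n+1) (by omega)).2]) (ih (j+1))
      · rw [h0 (n+1) (j+2) (by omega) (Or.inr (by omega))]

lemma snapExp_rec (hp : IsSnapshotLaw a p) {n : ℕ} (hn : 1 ≤ n) :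
    snapExp p (n + 1) = a (n + 1) + (1 - a (n + 1)) * (snapExp p n + 1) := by
  obtain ⟨h1, h0, hr, hs⟩ := hp
  unfold snapExp
  rw [shift_sum (fun k => (k : ℝ) * p (n + 1) k) n]
  simp only [Nat.cast_one, one_mul]
  rw [hr n hn]
  have hcong : ∑ k ∈ Icc 1 n, ((k + 1 : ℕ) : ℝ) * p (n + 1) (k + 1)
      = (1 - a (n+1)) * ((∑ k ∈ Icc 1 n, (k:ℝ) * p n k) + ∑ k ∈ Icc 1 n, p n k) := by
    rw [mul_add, Finset.mul_sum, Finset.mul_sum, ← Finset.sum_add_distrib]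
    refine Finset.sum_congr rfl fun k hk => ?_
    rw [Finset.mem_Icc] at hk
    rw [hs n k hn hk.1 hk.2]
    push_cast
    ring
  rw [hcong, snap_mass ⟨h1, h0, hr, hs⟩ n hn]


lemma snap_main_aux {g al : ℝ} (hg : 0 < g) (hal1 : 1 < al) (hal2 : al < 2)
    (a E : ℕ → ℝ) (ha : ∀ n, a n = min 1 (g / (n : ℝ) ^ al))
    (hErec : ∀ n : ℕ, 1 ≤ n →
      E (n + 1) = (1 - a (n + 1)) * E n + ((n : ℝ) + 1) * a (n + 1)) :
    Tendsto (fun n : ℕ => E n / (n : ℝ) ^ (2 - al)) atTop (nhds (g / (2 - al))) := by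
  obtain ⟨b, hbdef⟩ : ∃ b : ℝ, b = 2 - al := ⟨_, rfl⟩
  rw [← hbdef]
  obtain ⟨c, hcdef⟩ : ∃ c : ℝ, c = g / b := ⟨_, rfl⟩
  rw [← hcdef]
  have hb0 : (0:ℝ) < b := by rw [hbdef]; linarith
  have hb1 : b ≤ 1 := by rw [hbdef]; linarith
  have hc0 : 0 < c := by rw [hcdef]; exact div_pos hg hb0
  obtain ⟨θ, hθdef⟩ : ∃ x : ℝ, x = min (al / 2) (2 * al - 2) := ⟨_, rfl⟩
  have hθ0 : 0 < θ := by rw [hθdef]; exact lt_min (by linarith) (by linarith)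
  have hθ1 : θ < 1 := by rw [hθdef]; exact lt_of_le_of_lt (min_le_left _ _) (by linarith)
  have hθle : θ ≤ 2 * al - 2 := by rw [hθdef]; exact min_le_right _ _
  have hθgt : al - 1 < θ := by rw [hθdef]; exact lt_min (by linarith) (by linarith)
  obtain ⟨t, htdef⟩ : ∃ x : ℝ, x = 1 - θ := ⟨_, rfl⟩
  have ht0 : 0 < t := by rw [htdef]; linarith
  have ht1 : t ≤ 1 := by rw [htdef]; linarith
  have htb : t < b := by rw [htdef, hbdef]; linarith
  have hal0 : (0:ℝ) < al := by linarith
  have ha0 : ∀ m, 0 ≤ a m := fun m => by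
    rw [ha m]
    exact le_min zero_le_one (div_nonneg hg.le (Real.rpow_nonneg (Nat.cast_nonneg m) al))
  have ha1 : ∀ m, a m ≤ 1 := fun m => by rw [ha m]; exact min_le_left _ _
  -- choose N
  have htop : Tendsto (fun n : ℕ => (n : ℝ) ^ al) atTop atTop :=
    (tendsto_rpow_atTop hal0).comp tendsto_natCast_atTop_atTop
  obtain ⟨N₀, hN₀⟩ := Filter.eventually_atTop.mp (htop.eventually_ge_atTop g)
  set N := max N₀ 1 with hNdef
  have hN1 : 1 ≤ N := le_max_right _ _
  have haN : ∀ m : ℕ, N ≤ m → a m = g / (m : ℝ) ^ al := by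
    intro m hm
    have h1 : (1:ℕ) ≤ m := le_trans hN1 hm
    have hm0 : (0:ℝ) < (m:ℝ) := by exact_mod_cast h1
    have hpos : (0:ℝ) < (m:ℝ) ^ al := Real.rpow_pos_of_pos hm0 al
    rw [ha m, min_eq_right]
    rw [div_le_one hpos]
    exact hN₀ m (le_trans (le_max_left _ _) hm)
  -- per-step estimate
  have key : ∀ n : ℕ, N ≤ n →
      |E (n+1) - c * ((n:ℝ)+1) ^ b| ≤ |E n - c * (n:ℝ) ^ b|
        + c * b * ((n:ℝ) ^ (b-1) - ((n:ℝ)+1) ^ (b-1)) + c * g * (n:ℝ) ^ (-θ) := by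
    intro n hn
    have hn1 : 1 ≤ n := le_trans hN1 hn
    have hx1 : (1:ℝ) ≤ (n:ℝ) := by exact_mod_cast hn1
    have hx0 : (0:ℝ) < (n:ℝ) := by linarith
    have hx0' : (0:ℝ) < (n:ℝ)+1 := by linarith
    have han : a (n+1) = g / ((n:ℝ)+1) ^ al := by
      have h := haN (n+1) (le_trans hn (Nat.le_succ n))
      rwa [Nat.cast_add, Nat.cast_one] at h
    have hid : E (n+1) - c * ((n:ℝ)+1) ^ b
        = (1 - a (n+1)) * (E n - c * (n:ℝ) ^ b)
          + (((n:ℝ)+1) * a (n+1) - c * (((n:ℝ)+1) ^ b - (n:ℝ) ^ b)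
            - a (n+1) * (c * (n:ℝ) ^ b)) := by
      rw [hErec n hn1]; ring
    have hcb : c * b = g := by rw [hcdef]; field_simp
    have e1 : ((n:ℝ)+1) * a (n+1) = c * b * ((n:ℝ)+1) ^ (b-1) := by
      rw [han, hcb]
      have hb' : b - 1 = 1 - al := by rw [hbdef]; ring
      rw [hb', Real.rpow_sub hx0', Real.rpow_one]
      have hpal : ((n:ℝ)+1) ^ al ≠ 0 := (Real.rpow_pos_of_pos hx0' al).ne'
      field_simp
    have tb1 := tangent_rpow hb0 hb1 (x := (n:ℝ)+1) (y := (n:ℝ)) hx0' hx0.le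
    have hm1 : (n:ℝ) - ((n:ℝ)+1) = -1 := by ring
    rw [hm1] at tb1
    have tb2 := tangent_rpow hb0 hb1 (x := (n:ℝ)) (y := (n:ℝ)+1) hx0 hx0'.le
    have hm2 : ((n:ℝ)+1) - (n:ℝ) = 1 := by ring
    rw [hm2] at tb2
    have hR2a : 0 ≤ a (n+1) * (c * (n:ℝ) ^ b) :=
      mul_nonneg (ha0 _) (mul_nonneg hc0.le (Real.rpow_nonneg hx0.le b))
    have hR2b : a (n+1) * (c * (n:ℝ) ^ b) ≤ c * g * (n:ℝ) ^ (-θ) := by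
      rw [han]
      have hpal : (0:ℝ) < (n:ℝ) ^ al := Real.rpow_pos_of_pos hx0 al
      have h1 : g / ((n:ℝ)+1) ^ al ≤ g / (n:ℝ) ^ al := by
        apply div_le_div_of_nonneg_left hg.le hpal
        exact Real.rpow_le_rpow hx0.le (by linarith) hal0.le
      have h2 : g / (n:ℝ) ^ al * (c * (n:ℝ) ^ b) = c * g * (n:ℝ) ^ (b - al) := by
        rw [Real.rpow_sub hx0]
        ring
      have h3 : (n:ℝ) ^ (b - al) ≤ (n:ℝ) ^ (-θ) :=
        Real.rpow_le_rpow_of_exponent_le hx1 (by rw [hbdef]; linarith)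
      calc g / ((n:ℝ)+1) ^ al * (c * (n:ℝ) ^ b)
          ≤ g / (n:ℝ) ^ al * (c * (n:ℝ) ^ b) :=
            mul_le_mul_of_nonneg_right h1 (mul_nonneg hc0.le (Real.rpow_nonneg hx0.le b))
        _ = c * g * (n:ℝ) ^ (b - al) := h2
        _ ≤ c * g * (n:ℝ) ^ (-θ) :=
            mul_le_mul_of_nonneg_left h3 (mul_nonneg hc0.le hg.le)
    have hmono : ((n:ℝ)+1) ^ (b-1) ≤ (n:ℝ) ^ (b-1) :=
      Real.rpow_le_rpow_of_nonpos hx0 (by linarith) (by linarith)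
    rw [hid]
    have habs1 : |(1 - a (n+1)) * (E n - c * (n:ℝ) ^ b)| ≤ |E n - c * (n:ℝ) ^ b| := by
      rw [abs_mul]
      have h5 : |1 - a (n+1)| ≤ 1 := by
        rw [abs_of_nonneg (by linarith [ha1 (n+1)])]
        linarith [ha0 (n+1)]
      exact mul_le_of_le_one_left (abs_nonneg _) h5
    have hRabs : |((n:ℝ)+1) * a (n+1) - c * (((n:ℝ)+1) ^ b - (n:ℝ) ^ b)
          - a (n+1) * (c * (n:ℝ) ^ b)|
        ≤ c * b * ((n:ℝ) ^ (b-1) - ((n:ℝ)+1) ^ (b-1)) + c * g * (n:ℝ) ^ (-θ) := by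
      rw [abs_le]
      constructor
      · rw [e1]
        nlinarith [mul_le_mul_of_nonneg_left tb2 hc0.le, hR2b]
      · rw [e1]
        nlinarith [mul_le_mul_of_nonneg_left tb1 hc0.le, hR2a,
          mul_nonneg (mul_nonneg hc0.le hg.le) (Real.rpow_nonneg hx0.le (-θ)),
          mul_nonneg (mul_nonneg hc0.le hb0.le) (sub_nonneg.mpr hmono)]
    calc |(1 - a (n+1)) * (E n - c * (n:ℝ) ^ b)
          + (((n:ℝ)+1) * a (n+1) - c * (((n:ℝ)+1) ^ b - (n:ℝ) ^ b)
            - a (n+1) * (c * (n:ℝ) ^ b))|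
        ≤ |(1 - a (n+1)) * (E n - c * (n:ℝ) ^ b)|
          + |((n:ℝ)+1) * a (n+1) - c * (((n:ℝ)+1) ^ b - (n:ℝ) ^ b)
            - a (n+1) * (c * (n:ℝ) ^ b)| := abs_add_le _ _
      _ ≤ _ := by linarith [habs1, hRabs]
  -- summed estimate
  have claim : ∀ j : ℕ, |E (N+j) - c * ((N+j : ℕ):ℝ) ^ b| ≤ |E N - c * (N:ℝ) ^ b|
      + c * b * ((N:ℝ) ^ (b-1) - ((N+j : ℕ):ℝ) ^ (b-1))
      + c * g * ∑ k ∈ Finset.range j, ((N+k : ℕ):ℝ) ^ (-θ) := by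
    intro j
    induction j with
    | zero =>
      simp only [Nat.add_zero, Finset.range_zero, Finset.sum_empty, mul_zero, sub_self,
        add_zero]
      exact le_rfl
    | succ j ih =>
      have hkey := key (N+j) (Nat.le_add_right N j)
      have hcast : ((N + (j+1) : ℕ):ℝ) = ((N+j : ℕ):ℝ) + 1 := by push_cast; ring
      rw [hcast, Finset.sum_range_succ, mul_add]
      have hE : N + (j+1) = (N+j) + 1 := rfl
      rw [hE]
      linarith [hkey, ih]
  -- uniform bound
  obtain ⟨C₀, hC₀⟩ : ∃ x : ℝ, x = |E N - c * (N:ℝ) ^ b| + c * b * (N:ℝ) ^ (b-1) := ⟨_, rfl⟩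
  have habs : ∀ n : ℕ, N ≤ n →
      |E n - c * (n:ℝ) ^ b| ≤ C₀ + (c * g / t) * (n:ℝ) ^ t := by
    intro n hn
    obtain ⟨j, rfl⟩ := Nat.exists_eq_add_of_le hn
    rw [hC₀]
    have h1 := claim j
    have hsum : ∑ k ∈ Finset.range j, ((N+k : ℕ):ℝ) ^ (-θ) ≤ ((N+j : ℕ):ℝ) ^ t / t := by
      have hre : ∑ m ∈ Finset.Ico N (N+j), (m:ℝ) ^ (-θ)
          = ∑ k ∈ Finset.range j, ((N+k : ℕ):ℝ) ^ (-θ) := by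
        rw [Finset.sum_Ico_eq_sum_range]
        simp
      rw [← hre]
      have hsub : Finset.Ico N (N+j) ⊆ Finset.Icc 1 (N+j) := by
        intro m hm
        rw [Finset.mem_Ico] at hm
        rw [Finset.mem_Icc]
        omega
      have h2 : ∑ m ∈ Finset.Ico N (N+j), (m:ℝ) ^ (-θ)
          ≤ ∑ m ∈ Finset.Icc 1 (N+j), (m:ℝ) ^ (-θ) :=
        Finset.sum_le_sum_of_subset_of_nonneg hsub
          (fun i _ _ => Real.rpow_nonneg (Nat.cast_nonneg i) _)
      have h4 := sum_rpow_le ht0 ht1 (N+j)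
      have h5 : t - 1 = -θ := by rw [htdef]; ring
      rw [h5] at h4
      rw [le_div_iff₀ ht0]
      nlinarith [h2, h4]
    have h6 : 0 ≤ ((N+j : ℕ):ℝ) ^ (b-1) := Real.rpow_nonneg (Nat.cast_nonneg _) _
    have h7 : c * g * ∑ k ∈ Finset.range j, ((N+k : ℕ):ℝ) ^ (-θ)
        ≤ c * g * (((N+j : ℕ):ℝ) ^ t / t) :=
      mul_le_mul_of_nonneg_left hsum (mul_nonneg hc0.le hg.le)
    have h8 : c * g * (((N+j : ℕ):ℝ) ^ t / t) = (c * g / t) * ((N+j : ℕ):ℝ) ^ t := by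
      ring
    nlinarith [h1, h7, mul_nonneg (mul_nonneg hc0.le hb0.le) h6]
  -- limit of the error term
  have hzero : Tendsto (fun n : ℕ => (E n - c * (n:ℝ) ^ b) / (n:ℝ) ^ b) atTop (nhds 0) := by
    have l1 : Tendsto (fun n : ℕ => (n:ℝ) ^ (-b)) atTop (nhds 0) :=
      (tendsto_rpow_neg_atTop hb0).comp tendsto_natCast_atTop_atTop
    have l2 : Tendsto (fun n : ℕ => (n:ℝ) ^ (t-b)) atTop (nhds 0) := by
      have h := (tendsto_rpow_neg_atTop (by linarith : (0:ℝ) < b - t)).comp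
        tendsto_natCast_atTop_atTop
      exact h.congr fun n => by simp [Function.comp, neg_sub]
    have lG : Tendsto (fun n : ℕ => C₀ * (n:ℝ) ^ (-b) + (c * g / t) * (n:ℝ) ^ (t-b))
        atTop (nhds 0) := by
      have h := (l1.const_mul C₀).add (l2.const_mul (c * g / t))
      simpa using h
    apply squeeze_zero_norm' _ lG
    filter_upwards [eventually_ge_atTop N] with n hn
    have hn1 : 1 ≤ n := le_trans hN1 hn
    have hx1 : (1:ℝ) ≤ (n:ℝ) := by exact_mod_cast hn1
    have hx0 : (0:ℝ) < (n:ℝ) := by linarith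
    have hpb : (0:ℝ) < (n:ℝ) ^ b := Real.rpow_pos_of_pos hx0 b
    rw [Real.norm_eq_abs, abs_div, abs_of_nonneg hpb.le, div_le_iff₀ hpb]
    have e3 : (n:ℝ) ^ (-b) * (n:ℝ) ^ b = 1 := by
      rw [← Real.rpow_add hx0]; simp
    have e4 : (n:ℝ) ^ (t-b) * (n:ℝ) ^ b = (n:ℝ) ^ t := by
      rw [← Real.rpow_add hx0]; ring_nf
    calc |E n - c * (n:ℝ) ^ b| ≤ C₀ + (c * g / t) * (n:ℝ) ^ t := habs n hn
      _ = (C₀ * (n:ℝ) ^ (-b) + (c * g / t) * (n:ℝ) ^ (t-b)) * (n:ℝ) ^ b := by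
          rw [add_mul, mul_assoc, mul_assoc, e3, e4]; ring
  -- conclude
  have heq : (fun n : ℕ => c + (E n - c * (n:ℝ) ^ b) / (n:ℝ) ^ b)
      =ᶠ[atTop] (fun n : ℕ => E n / (n:ℝ) ^ b) := by
    filter_upwards [eventually_ge_atTop 1] with n hn
    have hx0 : (0:ℝ) < (n:ℝ) := by exact_mod_cast hn
    have hpb : ((n:ℝ) ^ b) ≠ 0 := (Real.rpow_pos_of_pos hx0 b).ne'
    field_simp
    ring
  exact Tendsto.congr' heq (by simpa using (tendsto_const_nhds (x := c)).add hzero)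

end SnapshotAux

theorem snapshot_subquadratic_case (g al : ℝ) (hg : 0 < g)
    (hal : al ∈ Set.Ioo (1 : ℝ) 2) (a : ℕ → ℝ) (p : ℕ → ℕ → ℝ)
    (ha : ∀ n, a n = min 1 (g / (n : ℝ) ^ al))
    (hp : IsSnapshotLaw a p) :
    Tendsto (fun n : ℕ => ((n : ℝ) + 1 - snapExp p n) / (n : ℝ) ^ (2 - al))
      atTop (nhds (g / (2 - al))) := by
  obtain ⟨hal1, hal2⟩ := hal
  have hErec : ∀ n : ℕ, 1 ≤ n →
      (fun n : ℕ => (n : ℝ) + 1 - snapExp p n) (n + 1)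
        = (1 - a (n + 1)) * ((fun n : ℕ => (n : ℝ) + 1 - snapExp p n) n)
          + ((n : ℝ) + 1) * a (n + 1) := by
    intro n hn
    simp only []
    rw [snapExp_rec hp hn]
    push_cast
    ring
  exact snap_main_aux hg hal1 hal2 a (fun n : ℕ => (n : ℝ) + 1 - snapExp p n) ha hErec
end
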